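/- Let V₁, V₂: X₁×X̂₁ → ℝ≥0 and X₂×X̂₂ → ℝ≥0 be nonnegative functions and δ₁, δ₂ class K∞ functions. Define Ṽ(x, x̂) = max(δ₁⁻¹(V₁(x₁, x̂₁)), δ₂⁻¹(V₂(x₂, x̂₂))) for x = (x₁,x₂), x̂ = (x̂₁,x̂₂). If α₁, α₂ are class K∞ functions with α_i(‖h_i(x_i) − ĥ_i(x̂_i)‖) ≤ V_i(x_i, x̂_i), then α̃(max_i ‖h_i(x_i) − ĥ_i(x̂_i)‖) ≤ Ṽ(x, x̂), where α̃ is the inverse of s ↦ max(α₁⁻¹(δ₁(s)), α₂⁻¹(δ₂(s))). -/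

import Mathlib

/-- A class K∞ function: continuous, strictly increasing, vanishing at 0, and unbounded. -/
def IsKInf (f : NNReal → NNReal) : Prop :=
  Continuous f ∧ StrictMono f ∧ f 0 = 0 ∧ Filter.Tendsto f Filter.atTop Filter.atTop

theorem IsKInf.strictMono {f : NNReal → NNReal} (hf : IsKInf f) : StrictMono f := hf.2.1

/-
Write `g s = max (α₁⁻¹ (δ₁ s)) (α₂⁻¹ (δ₂ s))`, so that `α̃ = g⁻¹`. Since `g` is strictly
increasing, `α̃ e ≤ M` is equivalent to `e ≤ g M`. For `M = Ṽ(x, x̂)` and each `i` we have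
`δᵢ M ≥ δᵢ (δᵢ⁻¹ Vᵢ) = Vᵢ ≥ αᵢ ‖hᵢ xᵢ - ĥᵢ x̂ᵢ‖`, hence `‖hᵢ xᵢ - ĥᵢ x̂ᵢ‖ ≤ αᵢ⁻¹ (δᵢ M) ≤ g M`.
-/

section

variable {α β : Type*} [LinearOrder α] [LinearOrder β] {f : α → β} {g : β → α}

theorem StrictMono.le_apply_iff_of_leftInverse (hf : StrictMono f)
    (hfg : Function.LeftInverse f g) {x : α} {y : β} : x ≤ g y ↔ f x ≤ y := by
  conv_rhs => rw [← hfg y]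
  exact hf.le_iff_le.symm

theorem StrictMono.apply_le_iff_of_leftInverse (hf : StrictMono f)
    (hfg : Function.LeftInverse f g) {x : α} {y : β} : g y ≤ x ↔ y ≤ f x := by
  conv_rhs => rw [← hfg y]
  exact hf.le_iff_le.symm

theorem StrictMono.of_leftInverse (hf : StrictMono f) (hfg : Function.LeftInverse f g) :
    StrictMono g := fun a b hab => hf.lt_iff_lt.1 (by rwa [hfg a, hfg b])

theorem StrictMono.le_apply_comp_of_apply_le {γ : Type*} [Preorder γ] (hf : StrictMono f)
    (hfg : Function.LeftInverse f g) {d : γ → β} {dInv : β → γ} (hd : Monotone d)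
    (hd' : Function.LeftInverse d dInv) {x : α} {y : β} {z : γ} (hxy : f x ≤ y)
    (hyz : dInv y ≤ z) : x ≤ g (d z) :=
  (hf.le_apply_iff_of_leftInverse hfg).2 (hxy.trans (hd' y ▸ hd hyz))

end

theorem stmt6
    {X1 Xh1 X2 Xh2 Y1 Y2 : Type*} [NormedAddCommGroup Y1] [NormedAddCommGroup Y2]
    (h1 : X1 → Y1) (hh1 : Xh1 → Y1) (h2 : X2 → Y2) (hh2 : Xh2 → Y2)
    (V1 : X1 → Xh1 → NNReal) (V2 : X2 → Xh2 → NNReal)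
    (δ1 δ2 δ1Inv δ2Inv α1 α2 α1Inv α2Inv : NNReal → NNReal)
    (hδ1 : IsKInf δ1) (hδ2 : IsKInf δ2) (hα1 : IsKInf α1) (hα2 : IsKInf α2)
    (hδ1Inv : ∀ s, δ1Inv (δ1 s) = s ∧ δ1 (δ1Inv s) = s)
    (hδ2Inv : ∀ s, δ2Inv (δ2 s) = s ∧ δ2 (δ2Inv s) = s)
    (hα1Inv : ∀ s, α1Inv (α1 s) = s ∧ α1 (α1Inv s) = s)
    (hα2Inv : ∀ s, α2Inv (α2 s) = s ∧ α2 (α2Inv s) = s)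
    (hV1 : ∀ x1 xh1, α1 ‖h1 x1 - hh1 xh1‖₊ ≤ V1 x1 xh1)
    (hV2 : ∀ x2 xh2, α2 ‖h2 x2 - hh2 xh2‖₊ ≤ V2 x2 xh2)
    -- α̃ is the inverse of s ↦ max(α₁⁻¹(δ₁(s)), α₂⁻¹(δ₂(s))):
    (αt : NNReal → NNReal)
    (hαt : ∀ s, αt (max (α1Inv (δ1 s)) (α2Inv (δ2 s))) = s ∧
                max (α1Inv (δ1 (αt s))) (α2Inv (δ2 (αt s))) = s) :
    ∀ (x1 : X1) (xh1 : Xh1) (x2 : X2) (xh2 : Xh2),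
      αt (max ‖h1 x1 - hh1 xh1‖₊ ‖h2 x2 - hh2 xh2‖₊) ≤
        max (δ1Inv (V1 x1 xh1)) (δ2Inv (V2 x2 xh2)) := by
  intro x1 xh1 x2 xh2
  have hg : StrictMono fun s => max (α1Inv (δ1 s)) (α2Inv (δ2 s)) := fun a b hab =>
    max_lt_max (hα1.strictMono.of_leftInverse (hα1Inv · |>.2) (hδ1.strictMono hab))
      (hα2.strictMono.of_leftInverse (hα2Inv · |>.2) (hδ2.strictMono hab))
  rw [hg.apply_le_iff_of_leftInverse (hαt · |>.2)]
  exact max_le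
    ((hα1.strictMono.le_apply_comp_of_apply_le (hα1Inv · |>.2) hδ1.strictMono.monotone
      (hδ1Inv · |>.2) (hV1 x1 xh1) (le_max_left _ _)).trans (le_max_left _ _))
    ((hα2.strictMono.le_apply_comp_of_apply_le (hα2Inv · |>.2) hδ2.strictMono.monotone
      (hδ2Inv · |>.2) (hV2 x2 xh2) (le_max_right _ _)).trans (le_max_right _ _))
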